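/- For fixed real numbers y₁ > 0 > y₂, the function x ↦ TP₁(x, y₁, y₂) is nondecreasing on the interval [√(−y₁·y₂), ∞): if √(−y₁·y₂) ≤ x ≤ x′ then TP₁(x, y₁, y₂) ≤ TP₁(x′, y₁, y₂), with strict inequality whenever x < x′. -/
import Mathlib


/-- `TP₁(x, y₁, y₂) = √((x² + y₁²)(x² + y₂²)) / (2x) − (y₁ − y₂)/2`. -/
noncomputable def TP1 (x y₁ y₂ : ℝ) : ℝ :=
  Real.sqrt ((x ^ 2 + y₁ ^ 2) * (x ^ 2 + y₂ ^ 2)) / (2 * x) - (y₁ - y₂) / 2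

lemma tp1_aux (y₁ y₂ : ℝ) (hy₁ : 0 < y₁) (hy₂ : y₂ < 0) (x x' : ℝ)
    (hx : Real.sqrt (-(y₁ * y₂)) ≤ x) (hlt : x < x') :
    TP1 x y₁ y₂ < TP1 x' y₁ y₂ := by
  have hv : 0 < -(y₁ * y₂) := by nlinarith
  have hs : 0 < Real.sqrt (-(y₁ * y₂)) := Real.sqrt_pos.2 hv
  have hx0 : 0 < x := lt_of_lt_of_le hs hx
  have hx'0 : 0 < x' := hx0.trans hlt
  have hsq : Real.sqrt (-(y₁ * y₂)) ^ 2 = -(y₁ * y₂) := Real.sq_sqrt hv.le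
  have hx2 : -(y₁ * y₂) ≤ x ^ 2 := by nlinarith
  have hx'2 : -(y₁ * y₂) < x' ^ 2 := by nlinarith
  have h1 : x ^ 2 < x' ^ 2 := by nlinarith
  have h2 : (y₁ * y₂) ^ 2 < x ^ 2 * x' ^ 2 := by nlinarith
  have hP : 0 ≤ (x ^ 2 + y₁ ^ 2) * (x ^ 2 + y₂ ^ 2) := by positivity
  have hQ : 0 ≤ (x' ^ 2 + y₁ ^ 2) * (x' ^ 2 + y₂ ^ 2) := by positivity
  have key : (x ^ 2 + y₁ ^ 2) * (x ^ 2 + y₂ ^ 2) / (2 * x) ^ 2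
      < (x' ^ 2 + y₁ ^ 2) * (x' ^ 2 + y₂ ^ 2) / (2 * x') ^ 2 := by
    rw [div_lt_div_iff₀ (by positivity) (by positivity)]
    nlinarith [mul_pos (sub_pos.2 h1) (sub_pos.2 h2)]
  have e1 : Real.sqrt ((x ^ 2 + y₁ ^ 2) * (x ^ 2 + y₂ ^ 2)) / (2 * x)
      = Real.sqrt ((x ^ 2 + y₁ ^ 2) * (x ^ 2 + y₂ ^ 2) / (2 * x) ^ 2) := by
    rw [Real.sqrt_div hP, Real.sqrt_sq (by positivity)]
  have e2 : Real.sqrt ((x' ^ 2 + y₁ ^ 2) * (x' ^ 2 + y₂ ^ 2)) / (2 * x')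
      = Real.sqrt ((x' ^ 2 + y₁ ^ 2) * (x' ^ 2 + y₂ ^ 2) / (2 * x') ^ 2) := by
    rw [Real.sqrt_div hQ, Real.sqrt_sq (by positivity)]
  unfold TP1
  rw [e1, e2]
  have := Real.sqrt_lt_sqrt (by positivity) key
  linarith

/-- For fixed `y₁ > 0 > y₂`, `x ↦ TP₁(x, y₁, y₂)` is nondecreasing on
`[√(−y₁·y₂), ∞)`, and strictly increasing there. -/
theorem stmt5 (y₁ y₂ : ℝ) (hy₁ : 0 < y₁) (hy₂ : y₂ < 0) :
    ∀ x x' : ℝ, Real.sqrt (-(y₁ * y₂)) ≤ x → x ≤ x' →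
      TP1 x y₁ y₂ ≤ TP1 x' y₁ y₂ ∧ (x < x' → TP1 x y₁ y₂ < TP1 x' y₁ y₂) := by
  intro x x' hx hxx'
  rcases eq_or_lt_of_le hxx' with rfl | hlt
  · exact ⟨le_refl _, fun h => absurd h (lt_irrefl _)⟩
  · exact ⟨(tp1_aux y₁ y₂ hy₁ hy₂ x x' hx hlt).le, fun _ => tp1_aux y₁ y₂ hy₁ hy₂ x x' hx hlt⟩
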